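/- Let B₁ ∈ ℝ^{n₀×n₁}, B₂ ∈ ℝ^{n₁×n₂} be boundary matrices with B₁B₂ = 0, and L₁ = B₁^TB₁ + B₂B₂^T the combinatorial Hodge 1-Laplacian. Then the matrix Â = (B̂₁⁻)^TB̂₁⁺ + (B̂₁⁺)^TB̂₁⁻ + B̂₂⁺(B̂₂⁻)^T + B̂₂⁻(B̂₂⁺)^T satisfies V^T Â = -L₁ V^T, and Â is symmetric with nonnegative entries. -/

import Mathlib

/-!
Write `X⁺, X⁻` for the entrywise positive and negative parts of `X`, so `X = X⁺ - X⁻`.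
Since `V = [I; -I]` we have `(VM)⁺ = [M⁺; M⁻]` and `(VM)⁻ = [M⁻; M⁺]`, hence `Vᵀ(VM)⁺ = M` and
`Vᵀ(VM)⁻ = -M`. Consequently `Vᵀ((VM)⁺(VM)⁻ᵀ + (VM)⁻(VM)⁺ᵀ) = -M(VM)ᵀ = -MMᵀVᵀ`. As
`B₁Vᵀ = (VB₁ᵀ)ᵀ`, the matrix `Â` is the sum of this symmetric, entrywise nonnegative expression for
`M = B₁ᵀ` and for `M = B₂`, which gives all three claims.
-/

open Matrix

/-- The lifting matrix `V = [I; -I]`. -/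
noncomputable def liftV (n : ℕ) : Matrix (Fin n ⊕ Fin n) (Fin n) ℝ :=
  Matrix.of fun i j =>
    match i with
    | Sum.inl a => if a = j then (1 : ℝ) else 0
    | Sum.inr a => if a = j then (-1 : ℝ) else 0

/-- Entrywise positive part. -/
def matPos {m k : Type*} (M : Matrix m k ℝ) : Matrix m k ℝ :=
  Matrix.of fun i j => max (M i j) 0

/-- Entrywise negative part. -/
def matNeg {m k : Type*} (M : Matrix m k ℝ) : Matrix m k ℝ :=
  Matrix.of fun i j => max (-M i j) 0

section PosNegParts

variable {m k : Type*}

lemma matPos_sub_matNeg (M : Matrix m k ℝ) : matPos M - matNeg M = M := by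
  ext i j
  simp only [Matrix.sub_apply, matPos, matNeg]
  rcases le_total (M i j) 0 with h | h <;> simp [h]

lemma matPos_neg (M : Matrix m k ℝ) : matPos (-M) = matNeg M := rfl

lemma matNeg_neg (M : Matrix m k ℝ) : matNeg (-M) = matPos M := by
  ext i j
  simp [matPos, matNeg]

lemma matPos_transpose (M : Matrix m k ℝ) : matPos Mᵀ = (matPos M)ᵀ := rfl

lemma matNeg_transpose (M : Matrix m k ℝ) : matNeg Mᵀ = (matNeg M)ᵀ := rfl

lemma matPos_fromRows {m' : Type*} (M : Matrix m k ℝ) (M' : Matrix m' k ℝ) :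
    matPos (fromRows M M') = fromRows (matPos M) (matPos M') :=
  fromRows_map M M' (max · 0)

lemma matNeg_fromRows {m' : Type*} (M : Matrix m k ℝ) (M' : Matrix m' k ℝ) :
    matNeg (fromRows M M') = fromRows (matNeg M) (matNeg M') :=
  fromRows_map M M' (fun x => max (-x) 0)

lemma matPos_apply_nonneg (M : Matrix m k ℝ) (i : m) (j : k) : 0 ≤ matPos M i j :=
  le_max_right _ _

lemma matNeg_apply_nonneg (M : Matrix m k ℝ) (i : m) (j : k) : 0 ≤ matNeg M i j :=
  le_max_right _ _

end PosNegParts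

lemma mul_apply_nonneg {l m k : Type*} [Fintype m] {M : Matrix l m ℝ} {N : Matrix m k ℝ}
    (hM : ∀ i j, 0 ≤ M i j) (hN : ∀ i j, 0 ≤ N i j) (i : l) (j : k) : 0 ≤ (M * N) i j :=
  Finset.sum_nonneg fun _ _ => mul_nonneg (hM _ _) (hN _ _)

def posNegGram {m k : Type*} [Fintype k] (X : Matrix m k ℝ) : Matrix m m ℝ :=
  matPos X * (matNeg X)ᵀ + matNeg X * (matPos X)ᵀ

section PosNegGram

variable {m k : Type*} [Fintype k]

lemma posNegGram_transpose (X : Matrix m k ℝ) : (posNegGram X)ᵀ = posNegGram X := by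
  simp only [posNegGram, transpose_add, transpose_mul, transpose_transpose]
  exact add_comm _ _

lemma posNegGram_apply_nonneg (X : Matrix m k ℝ) (i j : m) : 0 ≤ posNegGram X i j :=
  add_nonneg
    (mul_apply_nonneg (matPos_apply_nonneg X) (fun a b => matNeg_apply_nonneg X b a) i j)
    (mul_apply_nonneg (matNeg_apply_nonneg X) (fun a b => matPos_apply_nonneg X b a) i j)

end PosNegGram

section Lifting

variable {n : ℕ} {m : Type*}

lemma liftV_eq_fromRows (n : ℕ) : liftV n = fromRows 1 (-1) := by
  ext (a | a) j <;> simp [liftV, one_apply, apply_ite]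

lemma liftV_transpose_mul_matPos_liftV_mul (M : Matrix (Fin n) m ℝ) :
    (liftV n)ᵀ * matPos (liftV n * M) = M := by
  rw [liftV_eq_fromRows, fromRows_mul, matPos_fromRows, transpose_fromRows, fromCols_mul_fromRows]
  simp only [Matrix.one_mul, Matrix.neg_mul, matPos_neg, transpose_one, transpose_neg]
  rw [← sub_eq_add_neg, matPos_sub_matNeg]

lemma liftV_transpose_mul_matNeg_liftV_mul (M : Matrix (Fin n) m ℝ) :
    (liftV n)ᵀ * matNeg (liftV n * M) = -M := by
  rw [liftV_eq_fromRows, fromRows_mul, matNeg_fromRows, transpose_fromRows, fromCols_mul_fromRows]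
  simp only [Matrix.one_mul, Matrix.neg_mul, matNeg_neg, transpose_one, transpose_neg]
  rw [← sub_eq_add_neg, ← neg_sub, matPos_sub_matNeg]

lemma liftV_transpose_mul_posNegGram [Fintype m] (M : Matrix (Fin n) m ℝ) :
    (liftV n)ᵀ * posNegGram (liftV n * M) = -(M * Mᵀ) * (liftV n)ᵀ := by
  calc (liftV n)ᵀ * posNegGram (liftV n * M)
      = M * (matNeg (liftV n * M))ᵀ + -M * (matPos (liftV n * M))ᵀ := by
        rw [posNegGram, Matrix.mul_add, ← Matrix.mul_assoc, ← Matrix.mul_assoc,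
          liftV_transpose_mul_matPos_liftV_mul, liftV_transpose_mul_matNeg_liftV_mul]
    _ = -(M * (matPos (liftV n * M) - matNeg (liftV n * M))ᵀ) := by
        rw [transpose_sub, Matrix.mul_sub, Matrix.neg_mul]
        abel
    _ = -(M * Mᵀ) * (liftV n)ᵀ := by
        rw [matPos_sub_matNeg, transpose_mul, Matrix.neg_mul, Matrix.mul_assoc]

end Lifting

theorem stmt_6_general (n₀ n₁ n₂ : ℕ)
    (B₁ : Matrix (Fin n₀) (Fin n₁) ℝ) (B₂ : Matrix (Fin n₁) (Fin n₂) ℝ)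
    (A : Matrix (Fin n₁ ⊕ Fin n₁) (Fin n₁ ⊕ Fin n₁) ℝ)
    (hA : A = (matNeg (B₁ * (liftV n₁)ᵀ))ᵀ * matPos (B₁ * (liftV n₁)ᵀ) +
              (matPos (B₁ * (liftV n₁)ᵀ))ᵀ * matNeg (B₁ * (liftV n₁)ᵀ) +
              matPos (liftV n₁ * B₂) * (matNeg (liftV n₁ * B₂))ᵀ +
              matNeg (liftV n₁ * B₂) * (matPos (liftV n₁ * B₂))ᵀ) :
    (liftV n₁)ᵀ * A = (-(B₁ᵀ * B₁ + B₂ * B₂ᵀ)) * (liftV n₁)ᵀ ∧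
    Aᵀ = A ∧
    (∀ i j, 0 ≤ A i j) := by
  have hA' : A = posNegGram (liftV n₁ * B₁ᵀ) + posNegGram (liftV n₁ * B₂) := by
    have hB₁ : B₁ * (liftV n₁)ᵀ = (liftV n₁ * B₁ᵀ)ᵀ := by rw [transpose_mul, transpose_transpose]
    rw [hA, hB₁, matPos_transpose, matNeg_transpose, transpose_transpose, transpose_transpose,
      posNegGram, posNegGram, add_comm (matNeg _ * _), add_assoc]
  subst hA'
  refine ⟨?_, ?_, fun i j => add_nonneg (posNegGram_apply_nonneg _ i j)
    (posNegGram_apply_nonneg _ i j)⟩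
  · rw [Matrix.mul_add, liftV_transpose_mul_posNegGram, liftV_transpose_mul_posNegGram,
      transpose_transpose, neg_add, Matrix.add_mul]
  · rw [transpose_add, posNegGram_transpose, posNegGram_transpose]

/-- Lifting of the combinatorial Hodge 1-Laplacian `L₁ = B₁ᵀB₁ + B₂B₂ᵀ`:
with `B̂₁ = B₁Vᵀ`, `B̂₂ = VB₂`, the matrix
`Â = (B̂₁⁻)ᵀB̂₁⁺ + (B̂₁⁺)ᵀB̂₁⁻ + B̂₂⁺(B̂₂⁻)ᵀ + B̂₂⁻(B̂₂⁺)ᵀ` satisfies `Vᵀ Â = -L₁ Vᵀ`,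
and `Â` is symmetric with nonnegative entries. -/
theorem stmt_6 (n₀ n₁ n₂ : ℕ)
    (B₁ : Matrix (Fin n₀) (Fin n₁) ℝ) (B₂ : Matrix (Fin n₁) (Fin n₂) ℝ)
    (hB : B₁ * B₂ = 0)
    (A : Matrix (Fin n₁ ⊕ Fin n₁) (Fin n₁ ⊕ Fin n₁) ℝ)
    (hA : A = (matNeg (B₁ * (liftV n₁)ᵀ))ᵀ * matPos (B₁ * (liftV n₁)ᵀ) +
              (matPos (B₁ * (liftV n₁)ᵀ))ᵀ * matNeg (B₁ * (liftV n₁)ᵀ) +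
              matPos (liftV n₁ * B₂) * (matNeg (liftV n₁ * B₂))ᵀ +
              matNeg (liftV n₁ * B₂) * (matPos (liftV n₁ * B₂))ᵀ) :
    (liftV n₁)ᵀ * A = (-(B₁ᵀ * B₁ + B₂ * B₂ᵀ)) * (liftV n₁)ᵀ ∧
    Aᵀ = A ∧
    (∀ i j, 0 ≤ A i j) :=
  stmt_6_general n₀ n₁ n₂ B₁ B₂ A hA
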